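/- Let g be an M♮-convex function with finite nonempty effective domain and let b : E → {0,1}. Let {x_k}_{k=k̲}^{k̄} be a sequence such that x_k ∈ 𝒯_k for all k and, for each k ∈ {k̲+1, …, k̄}, x_{k−1} = x_k − χ_{u_k} + χ_{v_k} for some minimum transition (u_k, v_k) with respect to x_k. Assume k̲ + 1 ≤ k̄ and suppose there exists an index j ∈ {k̲+1, …, k̄} such that g(x_j) < g(x_{j−1}). Then for every k ∈ {k̲, …, j}, the point x_k is a Pareto optimal solution of the biobjective problem of minimizing (g(x), ⟨b,x⟩) over x ∈ dom g, i.e., there is no y ∈ dom g with g(y) ≤ g(x_k), ⟨b,y⟩ ≤ ⟨b,x_k⟩, and (g(y), ⟨b,y⟩) ≠ (g(x_k), ⟨b,x_k⟩). -/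

import Mathlib

open scoped BigOperators

/-- Characteristic vector of a singleton `{u}`. -/
def chiv {E : Type*} [DecidableEq E] (u : E) : E → ℤ := fun e => if e = u then 1 else 0

/-- Characteristic vector allowing the dummy symbol `z` (modelled as `none`), with `χ_z = 0`. -/
def chiOpt {E : Type*} [DecidableEq E] (v : Option E) : E → ℤ :=
  fun e => match v with
  | none => 0
  | some w => chiv w e

/-- M♮-convexity (with nonempty effective domain) for `g : (E → ℤ) → ℝ ∪ {+∞}`. -/
def MnatConvex {E : Type*} [DecidableEq E] (g : (E → ℤ) → WithTop ℝ) : Prop :=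
  (∃ x, g x < ⊤) ∧
  ∀ x y : E → ℤ, g x < ⊤ → g y < ⊤ → ∀ u : E, y u < x u →
    (g (x - chiv u) + g (y + chiv u) ≤ g x + g y) ∨
    (∃ v : E, x v < y v ∧
      g (x - chiv u + chiv v) + g (y + chiv u - chiv v) ≤ g x + g y)

/-- `⟨b,x⟩ = ∑ e, b e * x e`. -/
def innerb {E : Type*} [Fintype E] (b : E → ℤ) (x : E → ℤ) : ℤ := ∑ e, b e * x e

/-- `𝒯_i`: the minimizers of `g` on `𝒫_i = {x ∈ dom g : ⟨b,x⟩ = i}`. -/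
def Tset {E : Type*} [Fintype E] (g : (E → ℤ) → WithTop ℝ) (b : E → ℤ) (i : ℤ) :
    Set (E → ℤ) :=
  {x | g x < ⊤ ∧ innerb b x = i ∧ ∀ y : E → ℤ, g y < ⊤ → innerb b y = i → g x ≤ g y}

/-- A transition `(u,v)` with respect to `x`: `u ∈ E₁`, `v ∈ E₀ ∪ {z}`, and
`x - χ_u + χ_v ∈ dom g`. -/
def IsTransition {E : Type*} [DecidableEq E] (g : (E → ℤ) → WithTop ℝ) (b : E → ℤ)
    (x : E → ℤ) (u : E) (v : Option E) : Prop :=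
  b u = 1 ∧ (∀ w : E, v = some w → b w = 0) ∧ g (x - chiv u + chiOpt v) < ⊤

/-- The cost `g(x;u,v) = g(x - χ_u + χ_v) - g(x)` of a transition (as a real number;
both values are finite for transitions with respect to `x ∈ dom g`). -/
noncomputable def transCost {E : Type*} [DecidableEq E] (g : (E → ℤ) → WithTop ℝ)
    (x : E → ℤ) (u : E) (v : Option E) : ℝ :=
  (g (x - chiv u + chiOpt v)).untopD 0 - (g x).untopD 0

/-- A minimum transition with respect to `x`. -/
def IsMinTransition {E : Type*} [Fintype E] [DecidableEq E] (g : (E → ℤ) → WithTop ℝ)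
    (b : E → ℤ) (x : E → ℤ) (u : E) (v : Option E) : Prop :=
  IsTransition g b x u v ∧
    ∀ (u' : E) (v' : Option E), IsTransition g b x u' v' →
      transCost g x u v ≤ transCost g x u' v'

/-
Since `b` is `{0,1}`-valued, an M♮-exchange between minimizers on the levels `i + 1` and `i - 1`
either lands on level `i` twice or produces a minimizer on level `i - 1` closer to the one on
level `i + 1`; hence `g(x_{i+1}) + g(x_{i-1}) ≥ 2 g(x_i)`. By this discrete convexity the strict
decrease at `j` propagates to all earlier steps, so `k ↦ g(x_k)` is strictly decreasing on
`[k̲, j]`. A point `y` dominating `x_k` lies on a level `i ∈ [k̲, k]` and satisfies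
`g(x_i) ≤ g(y) ≤ g(x_k)`, which forces `i = k` and `g(y) = g(x_k)`.
-/

theorem strictAntiOn_Icc_of_add_self_le {α : Type*} [AddCommMonoid α] [LinearOrder α]
    [IsOrderedCancelAddMonoid α] {f : ℤ → α} {a j : ℤ}
    (hconv : ∀ k, a < k → k < j → f k + f k ≤ f (k + 1) + f (k - 1)) (hj : f j < f (j - 1)) :
    StrictAntiOn f (Set.Icc a j) := by
  have hstep (k : ℤ) (hkj : k ≤ j - 1) : a ≤ k → f (k + 1) < f k := by
    induction k, hkj using Int.leInductionDown with
    | base => simpa using fun _ => hj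
    | pred k hkj ih =>
      intro hak
      have hlt : f k + f k < f k + f (k - 1) :=
        calc f k + f k ≤ f (k + 1) + f (k - 1) := hconv k (by omega) (by omega)
          _ < f k + f (k - 1) := by gcongr; exact ih (by omega)
      simpa using lt_of_add_lt_add_left hlt
  refine strictAntiOn_of_succ_lt Set.ordConnected_Icc fun k _ hk hk' => ?_
  rw [Order.succ_eq_add_one] at hk' ⊢
  exact hstep k (by linarith [hk'.2]) hk.1

section
variable {E : Type*} [Fintype E]

theorem innerb_add (b x y : E → ℤ) :
    innerb b (x + y) = innerb b x + innerb b y :=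
  dotProduct_add b x y

theorem innerb_sub (b x y : E → ℤ) :
    innerb b (x - y) = innerb b x - innerb b y :=
  dotProduct_sub b x y

theorem innerb_chiv [DecidableEq E] (b : E → ℤ) (u : E) :
    innerb b (chiv u) = b u := by
  simp [innerb, chiv]

theorem exists_lt_of_innerb_lt {b p q : E → ℤ}
    (hb : ∀ e, b e = 0 ∨ b e = 1) (hlt : innerb b q < innerb b p) :
    ∃ u, b u = 1 ∧ q u < p u := by
  by_contra! h
  have : innerb b p ≤ innerb b q := Finset.sum_le_sum fun e _ => by
    rcases hb e with h0 | h1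
    · simp [h0]
    · simpa [h1] using h e h1
  omega

variable {g : (E → ℤ) → WithTop ℝ} {b : E → ℤ} {i : ℤ}

theorem mem_Tset_of_le {q q' : E → ℤ} (hq : q ∈ Tset g b i) (hle : g q' ≤ g q)
    (hi : innerb b q' = i) : q' ∈ Tset g b i :=
  ⟨hle.trans_lt hq.1, hi, fun y hy hyi => hle.trans (hq.2.2 y hy hyi)⟩

theorem add_self_le_of_add_le {x a c p q : E → ℤ} (hx : x ∈ Tset g b i)
    (ha : innerb b a = i) (hc : innerb b c = i) (hp : g p < ⊤) (hq : g q < ⊤)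
    (hle : g a + g c ≤ g p + g q) : g x + g x ≤ g p + g q := by
  obtain ⟨ha', hc'⟩ := WithTop.add_lt_top.mp (hle.trans_lt (WithTop.add_lt_top.mpr ⟨hp, hq⟩))
  exact (add_le_add (hx.2.2 a ha' ha) (hx.2.2 c hc' hc)).trans hle

theorem Tset_innerb_nonempty (hfin : {x : E → ℤ | g x < ⊤}.Finite) {y : E → ℤ} (hy : g y < ⊤) :
    (Tset g b (innerb b y)).Nonempty := by
  obtain ⟨m, ⟨hm, hmy⟩, hmin⟩ := Set.exists_min_image {w | g w < ⊤ ∧ innerb b w = innerb b y} g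
    (hfin.subset fun w hw => hw.1) ⟨y, hy, rfl⟩
  exact ⟨m, hm, hmy, fun w hw hwy => hmin w ⟨hw, hwy⟩⟩

variable [DecidableEq E]

theorem sum_natAbs_sub_lt_of_exchange {p q : E → ℤ} {u v : E} (hu : q u < p u) (hv : p v < q v) :
    ∑ e, (p e - (q + chiv u - chiv v) e).natAbs < ∑ e, (p e - q e).natAbs := by
  have huv : u ≠ v := by rintro rfl; omega
  refine Finset.sum_lt_sum (fun e _ => ?_) ⟨u, Finset.mem_univ u, ?_⟩
  · by_cases heu : e = u <;> by_cases hev : e = v <;> simp [chiv, heu, hev] <;> omega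
  · simp [chiv, huv]; omega

theorem add_self_le_add_of_mem_Tset (hg : MnatConvex g) (hb : ∀ e, b e = 0 ∨ b e = 1)
    {x p q : E → ℤ} (hx : x ∈ Tset g b i) (hp : p ∈ Tset g b (i + 1))
    (hq : q ∈ Tset g b (i - 1)) : g x + g x ≤ g p + g q := by
  obtain ⟨u, hbu, hu⟩ := exists_lt_of_innerb_lt hb (show innerb b q < innerb b p by
    rw [hp.2.1, hq.2.1]; omega)
  have hp_level (w : E) : innerb b (p - chiv u + chiv w) = i + b w := by
    simp only [innerb_add, innerb_sub, innerb_chiv, hp.2.1, hbu]; ring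
  have hq_level (w : E) : innerb b (q + chiv u - chiv w) = i - b w := by
    simp only [innerb_add, innerb_sub, innerb_chiv, hq.2.1, hbu]; ring
  rcases hg.2 p q hp.1 hq.1 u hu with hle | ⟨v, hv, hle⟩
  · refine add_self_le_of_add_le hx ?_ ?_ hp.1 hq.1 hle <;>
      simp only [innerb_add, innerb_sub, innerb_chiv, hp.2.1, hq.2.1, hbu] <;> ring
  rcases hb v with hbv | hbv
  · refine add_self_le_of_add_le hx ?_ ?_ hp.1 hq.1 hle
    · simpa [hbv] using hp_level v
    · simpa [hbv] using hq_level v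
  -- `u, v ∈ E₁`: the exchange keeps both points on their levels, so it replaces `q` by a point
  -- `q'` of `Tset g b (i - 1)` closer to `p`.
  set q' := q + chiv u - chiv v
  have hp' : g p ≤ g (p - chiv u + chiv v) :=
    hp.2.2 _ (WithTop.add_lt_top.mp (hle.trans_lt (WithTop.add_lt_top.mpr ⟨hp.1, hq.1⟩))).1
      (hbv ▸ hp_level v)
  have hq'q : g q' ≤ g q :=
    (WithTop.add_le_add_iff_left hp.1.ne).mp ((by gcongr : g p + g q' ≤ _).trans hle)
  have hq' : q' ∈ Tset g b (i - 1) := mem_Tset_of_le hq hq'q (by simpa [hbv] using hq_level v)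
  calc g x + g x ≤ g p + g q' := add_self_le_add_of_mem_Tset hg hb hx hp hq'
    _ ≤ g p + g q := by gcongr
termination_by ∑ e, (p e - q e).natAbs
decreasing_by exact sum_natAbs_sub_lt_of_exchange hu hv

theorem strictAntiOn_comp_of_mem_Tset (hg : MnatConvex g) (hb : ∀ e, b e = 0 ∨ b e = 1)
    {x : ℤ → E → ℤ} {a c j : ℤ} (hx : ∀ k, a ≤ k → k ≤ c → x k ∈ Tset g b k)
    (haj : a + 1 ≤ j) (hjc : j ≤ c) (hgj : g (x j) < g (x (j - 1))) :
    StrictAntiOn (g ∘ x) (Set.Icc a j) := by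
  set f : ℤ → ℝ := fun k => (g (x k)).untopD 0
  have hf (k : ℤ) (hak : a ≤ k) (hkc : k ≤ c) : (f k : WithTop ℝ) = g (x k) := by
    have hfin := (hx k hak hkc).1.ne
    simp only [f]
    lift g (x k) to ℝ using hfin with r
    rfl
  have hanti : StrictAntiOn f (Set.Icc a j) := by
    refine strictAntiOn_Icc_of_add_self_le (fun k hak hkj => ?_) ?_
    · have h := add_self_le_add_of_mem_Tset hg hb (hx k (by omega) (by omega))
        (hx (k + 1) (by omega) (by omega)) (hx (k - 1) (by omega) (by omega))
      rw [← hf k (by omega) (by omega), ← hf (k + 1) (by omega) (by omega),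
        ← hf (k - 1) (by omega) (by omega)] at h
      exact_mod_cast h
    · rw [← hf j (by omega) hjc, ← hf (j - 1) (by omega) (by omega)] at hgj
      exact_mod_cast hgj
  intro m hm n hn hmn
  simp only [Function.comp_apply]
  rw [← hf m hm.1 (by linarith [hm.2]), ← hf n hn.1 (by linarith [hn.2])]
  exact_mod_cast hanti hm hn hmn

end

theorem stmt_7_general {E : Type*} [Fintype E] [DecidableEq E]
    (g : (E → ℤ) → WithTop ℝ) (b : E → ℤ)
    (hg : MnatConvex g)
    (hfin : {x : E → ℤ | g x < ⊤}.Finite)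
    (hb : ∀ e : E, b e = 0 ∨ b e = 1)
    (kmin kmax : ℤ)
    (hkmin : (Tset g b kmin).Nonempty ∧ ∀ k : ℤ, (Tset g b k).Nonempty → kmin ≤ k)
    (x : ℤ → (E → ℤ))
    (hxk : ∀ k : ℤ, kmin ≤ k → k ≤ kmax → x k ∈ Tset g b k)
    (j : ℤ) (hj1 : kmin + 1 ≤ j) (hj2 : j ≤ kmax)
    (hgj : g (x j) < g (x (j - 1))) :
    ∀ k : ℤ, kmin ≤ k → k ≤ j →
      ¬∃ y : E → ℤ, g y < ⊤ ∧ g y ≤ g (x k) ∧ innerb b y ≤ innerb b (x k) ∧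
        ¬(g y = g (x k) ∧ innerb b y = innerb b (x k)) := by
  rintro k hk1 hk2 ⟨y, hy, hgy, hby, hne⟩
  have hanti := strictAntiOn_comp_of_mem_Tset hg hb hxk hj1 hj2 hgj
  have hxk' := hxk k hk1 (hk2.trans hj2)
  have hi : kmin ≤ innerb b y := hkmin.2 _ (Tset_innerb_nonempty hfin hy)
  rw [hxk'.2.1] at hby hne
  have hxi : g (x (innerb b y)) ≤ g y := (hxk _ hi (by omega)).2.2 y hy rfl
  rcases hby.lt_or_eq with hik | hik
  · exact (hanti ⟨hi, by omega⟩ ⟨hk1, hk2⟩ hik).not_ge (hxi.trans hgy)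
  · exact hne ⟨le_antisymm hgy (hxk'.2.2 y hy hik), hik⟩

/-- each `x_k` for `k̲ ≤ k ≤ j` is Pareto optimal for the biobjective
problem of minimizing `(g(x), ⟨b,x⟩)` over `x ∈ dom g`. -/
theorem stmt_7 {E : Type*} [Fintype E] [DecidableEq E] [Nonempty E]
    (g : (E → ℤ) → WithTop ℝ) (b : E → ℤ)
    (hg : MnatConvex g)
    (hfin : {x : E → ℤ | g x < ⊤}.Finite)
    (hb : ∀ e : E, b e = 0 ∨ b e = 1)
    (kmin kmax : ℤ)
    (hkmin : (Tset g b kmin).Nonempty ∧ ∀ k : ℤ, (Tset g b k).Nonempty → kmin ≤ k)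
    (hkmax : (Tset g b kmax).Nonempty ∧ ∀ k : ℤ, (Tset g b k).Nonempty → k ≤ kmax)
    (x : ℤ → (E → ℤ))
    (hxk : ∀ k : ℤ, kmin ≤ k → k ≤ kmax → x k ∈ Tset g b k)
    (hstep : ∀ k : ℤ, kmin + 1 ≤ k → k ≤ kmax →
      ∃ (u : E) (v : Option E), IsMinTransition g b (x k) u v ∧
        x (k - 1) = x k - chiv u + chiOpt v)
    (hgap : kmin + 1 ≤ kmax)
    (j : ℤ) (hj1 : kmin + 1 ≤ j) (hj2 : j ≤ kmax)
    (hgj : g (x j) < g (x (j - 1))) :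
    ∀ k : ℤ, kmin ≤ k → k ≤ j →
      ¬∃ y : E → ℤ, g y < ⊤ ∧ g y ≤ g (x k) ∧ innerb b y ≤ innerb b (x k) ∧
        ¬(g y = g (x k) ∧ innerb b y = innerb b (x k)) :=
  stmt_7_general g b hg hfin hb kmin kmax hkmin x hxk j hj1 hj2 hgj
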